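/- Let E be closed, non-empty, |E| = 0, and Q₀ a cube intersecting E. Then lim_{t→1⁻} 𝓛_{Q₀}(t) = 0, lim_{t→0⁺} 𝓢_{Q₀}(t) = 0, lim_{t→0⁺} 𝓛_{Q₀}(t) = l(𝓜(Q₀)), and lim_{t→1⁻} 𝓢_{Q₀}(t) = l(𝓜(Q₀)). -/

import Mathlib

open MeasureTheory Set
open scoped Classical

/-- A half-open axis-parallel cube in `ℝⁿ`. -/
structure Cube (n : ℕ) where
  a : Fin n → ℝ
  l : ℝ
  l_pos : 0 < l

namespace Cube

/-- The set of points of the cube. -/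
def carrier {n : ℕ} (Q : Cube n) : Set (Fin n → ℝ) :=
  {x | ∀ i, Q.a i ≤ x i ∧ x i < Q.a i + Q.l}

/-- The volume (Lebesgue measure) of the cube. -/
def vol {n : ℕ} (Q : Cube n) : ℝ := Q.l ^ n

end Cube

/-- `Q` is a dyadic subcube of `Q₀` of generation `j`. -/
def IsDyadic {n : ℕ} (Q₀ Q : Cube n) (j : ℕ) : Prop :=
  Q.l = Q₀.l / 2 ^ j ∧
    ∃ k : Fin n → ℕ, (∀ i, k i < 2 ^ j) ∧ ∀ i, Q.a i = Q₀.a i + (k i : ℝ) * Q₀.l / 2 ^ j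

/-- The dyadic system of subcubes of `Q₀`. -/
def dyadicFamily {n : ℕ} (Q₀ : Cube n) : Set (Cube n) := {Q | ∃ j, IsDyadic Q₀ Q j}

/-- `P` is the dyadic parent of `Q` inside the dyadic system of `Q₀`. -/
def IsParent {n : ℕ} (Q₀ P Q : Cube n) : Prop :=
  ∃ j : ℕ, IsDyadic Q₀ Q (j + 1) ∧ IsDyadic Q₀ P j ∧ Q.carrier ⊆ P.carrier

/-- The family `D_E(Q₀)` of maximal dyadic subcubes of `Q₀` avoiding `E` whose dyadic
parent meets `E`. -/
def DE {n : ℕ} (E : Set (Fin n → ℝ)) (Q₀ : Cube n) : Set (Cube n) :=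
  {Q | Q ∈ dyadicFamily Q₀ ∧ Q.carrier ∩ E = ∅ ∧
    ∀ P : Cube n, IsParent Q₀ P Q → (P.carrier ∩ E).Nonempty}

/-- `Σ_{Q ∈ D_E(Q₀), l(Q) ≥ L} |Q|`. -/
noncomputable def sumGE {n : ℕ} (E : Set (Fin n → ℝ)) (Q₀ : Cube n) (L : ℝ) : ℝ :=
  ∑' Q : {Q : Cube n // Q ∈ DE E Q₀ ∧ L ≤ Q.l}, (Q : Cube n).vol

/-- `Σ_{Q ∈ D_E(Q₀), l(Q) ≤ L} |Q|`. -/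
noncomputable def sumLE {n : ℕ} (E : Set (Fin n → ℝ)) (Q₀ : Cube n) (L : ℝ) : ℝ :=
  ∑' Q : {Q : Cube n // Q ∈ DE E Q₀ ∧ Q.l ≤ L}, (Q : Cube n).vol

/-- `Σ_{Q ∈ D_E(Q₀), l(Q) < L} |Q|`. -/
noncomputable def sumLT {n : ℕ} (E : Set (Fin n → ℝ)) (Q₀ : Cube n) (L : ℝ) : ℝ :=
  ∑' Q : {Q : Cube n // Q ∈ DE E Q₀ ∧ Q.l < L}, (Q : Cube n).vol

/-- `Σ_{Q ∈ D_E(Q₀), l(Q) > L} |Q|`. -/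
noncomputable def sumGT {n : ℕ} (E : Set (Fin n → ℝ)) (Q₀ : Cube n) (L : ℝ) : ℝ :=
  ∑' Q : {Q : Cube n // Q ∈ DE E Q₀ ∧ L < Q.l}, (Q : Cube n).vol

/-- The set `𝓛(t,Q₀,E)`. -/
def Lset {n : ℕ} (t : ℝ) (Q₀ : Cube n) (E : Set (Fin n → ℝ)) : Set ℝ :=
  {L | 0 ≤ L ∧ t * Q₀.vol ≤ sumGE E Q₀ L}

/-- The set `𝓢(t,Q₀,E)`. -/
def Sset {n : ℕ} (t : ℝ) (Q₀ : Cube n) (E : Set (Fin n → ℝ)) : Set ℝ :=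
  {L | 0 ≤ L ∧ t * Q₀.vol ≤ sumLE E Q₀ L}

/-- `𝓛_{Q₀}(t) = sup 𝓛(t,Q₀,E)` (the max, when attained). -/
noncomputable def Lfun {n : ℕ} (E : Set (Fin n → ℝ)) (Q₀ : Cube n) (t : ℝ) : ℝ :=
  sSup (Lset t Q₀ E)

/-- `𝓢_{Q₀}(t) = inf 𝓢(t,Q₀,E)` (the min, when attained). -/
noncomputable def Sfun {n : ℕ} (E : Set (Fin n → ℝ)) (Q₀ : Cube n) (t : ℝ) : ℝ :=
  sInf (Sset t Q₀ E)

/-- The Muckenhoupt class `A_p` (for `p = 1` the `A₁` condition, for `p > 1` the usual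
`A_p` condition), with cubes as the testing family. -/
def IsAp {n : ℕ} (p : ℝ) (w : (Fin n → ℝ) → ℝ) : Prop :=
  (∀ᵐ x, 0 < w x) ∧ LocallyIntegrable w volume ∧
    ∃ C : ℝ, 0 < C ∧ ∀ Q : Cube n,
      if p = 1 then
        (∫ x in Q.carrier, w x) / Q.vol ≤ C * essInf w (volume.restrict Q.carrier)
      else
        ((∫ x in Q.carrier, w x) / Q.vol) *
          ((∫ x in Q.carrier, w x ^ (-1 / (p - 1))) / Q.vol) ^ (p - 1) ≤ C

/-!
The stopping cubes `D_E(Q₀)` are pairwise disjoint (a stopping cube cannot contain the parent of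
another one, since that parent meets `E`) and, `E` being closed, they cover `Q₀ \ E`; as
`|E| = 0`, their volumes add up to `|Q₀|`. Hence a level `L` above the side of a stopping cube `Q`
misses at least the mass `|Q|`, which bounds `𝓛_{Q₀}(t)` by `l(Q)` for `t` near `1`, and dually
`𝓢_{Q₀}(t) ≤ l(Q)` for `t ≤ |Q|/|Q₀|`. Stopping cubes of arbitrarily small side exist: the fine
dyadic cube around a point `e ∈ Q₀ ∩ E` has points off `E` because `|E| = 0`, and the stopping
cube through such a point is finer, since it cannot contain `e`. At the other ends both functions
are eventually equal to `l(𝓜(Q₀))`.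
-/

theorem exists_div_two_pow_lt (L : ℝ) {ε : ℝ} (hε : 0 < ε) : ∃ j : ℕ, L / 2 ^ j < ε := by
  obtain ⟨j, hj⟩ := exists_nat_gt (L / ε)
  have h2 : (j : ℝ) < 2 ^ j := by exact_mod_cast Nat.lt_two_pow_self
  refine ⟨j, ?_⟩
  rw [div_lt_iff₀ hε] at hj
  rw [div_lt_iff₀ (by positivity)]
  nlinarith

namespace Cube

variable {n : ℕ}

theorem ext {Q Q' : Cube n} (ha : Q.a = Q'.a) (hl : Q.l = Q'.l) : Q = Q' := by
  cases Q; cases Q'; simp_all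

theorem vol_pos (Q : Cube n) : 0 < Q.vol := pow_pos Q.l_pos n

theorem a_mem_carrier (Q : Cube n) : Q.a ∈ Q.carrier :=
  fun _ => ⟨le_rfl, lt_add_of_pos_right _ Q.l_pos⟩

theorem carrier_eq_pi (Q : Cube n) :
    Q.carrier = Set.univ.pi fun i => Ico (Q.a i) (Q.a i + Q.l) := by
  ext x; simp [carrier]

theorem measurableSet_carrier (Q : Cube n) : MeasurableSet Q.carrier := by
  rw [carrier_eq_pi]; exact .univ_pi fun _ => measurableSet_Ico

theorem volume_carrier (Q : Cube n) : volume Q.carrier = ENNReal.ofReal Q.vol := by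
  simp [carrier_eq_pi, volume_pi_pi, vol, ENNReal.ofReal_pow Q.l_pos.le]

theorem measureReal_carrier (Q : Cube n) : volume.real Q.carrier = Q.vol := by
  rw [measureReal_def, volume_carrier, ENNReal.toReal_ofReal Q.vol_pos.le]

theorem volume_carrier_ne_top (Q : Cube n) : volume Q.carrier ≠ ⊤ := by
  simp [volume_carrier]

theorem dist_le_of_mem {Q : Cube n} {x y : Fin n → ℝ} (hx : x ∈ Q.carrier)
    (hy : y ∈ Q.carrier) : dist x y ≤ Q.l :=
  (dist_pi_le_iff Q.l_pos.le).2 fun i => by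
    rw [Real.dist_eq, abs_le]
    constructor <;> linarith [hx i, hy i]

end Cube

section Dyadic

variable {n : ℕ} {Q₀ Q Q' : Cube n} {j j' : ℕ} {x : Fin n → ℝ}

noncomputable def dyadicCube (Q₀ : Cube n) (j : ℕ) (k : Fin n → ℕ) : Cube n :=
  ⟨fun i => Q₀.a i + k i * Q₀.l / 2 ^ j, Q₀.l / 2 ^ j, div_pos Q₀.l_pos (by positivity)⟩

theorem isDyadic_iff :
    IsDyadic Q₀ Q j ↔ ∃ k : Fin n → ℕ, (∀ i, k i < 2 ^ j) ∧ Q = dyadicCube Q₀ j k := by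
  constructor
  · rintro ⟨hl, k, hk, ha⟩
    exact ⟨k, hk, Cube.ext (funext ha) hl⟩
  · rintro ⟨k, hk, rfl⟩
    exact ⟨rfl, k, hk, fun _ => rfl⟩

noncomputable def dyadicIndex (Q₀ : Cube n) (j : ℕ) (x : Fin n → ℝ) (i : Fin n) : ℤ :=
  ⌊(x i - Q₀.a i) / Q₀.l * 2 ^ j⌋

theorem mem_dyadicCube_iff {k : Fin n → ℕ} :
    x ∈ (dyadicCube Q₀ j k).carrier ↔ ∀ i, dyadicIndex Q₀ j x i = k i := by
  have hc : 0 < Q₀.l / 2 ^ j := div_pos Q₀.l_pos (by positivity)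
  have hx : ∀ i, (x i - Q₀.a i) / Q₀.l * 2 ^ j = (x i - Q₀.a i) / (Q₀.l / 2 ^ j) := by
    intro i; field_simp
  refine forall_congr' fun i => ?_
  rw [dyadicIndex, Int.floor_eq_iff, hx, le_div_iff₀ hc, div_lt_iff₀ hc]
  simp only [dyadicCube, Int.cast_natCast, mul_div_assoc]
  constructor <;> rintro ⟨h₁, h₂⟩ <;> constructor <;> linarith

theorem dyadicCube_zero (Q₀ : Cube n) : dyadicCube Q₀ 0 0 = Q₀ :=
  Cube.ext (by simp [dyadicCube]) (by simp [dyadicCube])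

theorem dyadicIndex_add_ediv (Q₀ : Cube n) (j m : ℕ) (x : Fin n → ℝ) (i : Fin n) :
    dyadicIndex Q₀ (j + m) x i / 2 ^ m = dyadicIndex Q₀ j x i := by
  have h := Int.floor_div_natCast ((x i - Q₀.a i) / Q₀.l * 2 ^ (j + m)) (2 ^ m)
  push_cast at h
  rw [dyadicIndex, dyadicIndex, ← h, pow_add, ← mul_assoc, mul_div_cancel_right₀ _ (by positivity)]

theorem dyadicIndex_mem_Ico (hx : x ∈ Q₀.carrier) (j : ℕ) (i : Fin n) :
    dyadicIndex Q₀ j x i ∈ Ico 0 (2 ^ j) := by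
  have h₀ : 0 ≤ (x i - Q₀.a i) / Q₀.l := div_nonneg (by linarith [hx i]) Q₀.l_pos.le
  have h₁ : (x i - Q₀.a i) / Q₀.l < 1 := (div_lt_one Q₀.l_pos).2 (by linarith [hx i])
  constructor
  · exact Int.floor_nonneg.2 (by positivity)
  · rw [dyadicIndex, Int.floor_lt]
    push_cast
    nlinarith [pow_pos (two_pos (α := ℝ)) j]

theorem IsDyadic.subset_of_le (hQ : IsDyadic Q₀ Q j) (hQ' : IsDyadic Q₀ Q' j')
    (hj : j ≤ j') (hx : x ∈ Q.carrier) (hx' : x ∈ Q'.carrier) : Q'.carrier ⊆ Q.carrier := by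
  obtain ⟨k, -, rfl⟩ := isDyadic_iff.1 hQ
  obtain ⟨k', -, rfl⟩ := isDyadic_iff.1 hQ'
  obtain ⟨m, rfl⟩ := Nat.exists_eq_add_of_le hj
  intro y hy
  rw [mem_dyadicCube_iff] at hx hx' hy ⊢
  intro i
  rw [← dyadicIndex_add_ediv Q₀ j m, hy, ← hx', dyadicIndex_add_ediv, hx]

theorem IsDyadic.eq_of_mem (hQ : IsDyadic Q₀ Q j) (hQ' : IsDyadic Q₀ Q' j)
    (hx : x ∈ Q.carrier) (hx' : x ∈ Q'.carrier) : Q = Q' := by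
  obtain ⟨k, -, rfl⟩ := isDyadic_iff.1 hQ
  obtain ⟨k', -, rfl⟩ := isDyadic_iff.1 hQ'
  rw [mem_dyadicCube_iff] at hx hx'
  have hk : k = k' := funext fun i => by exact_mod_cast (hx i).symm.trans (hx' i)
  rw [hk]

theorem IsDyadic.generation_eq (hj : IsDyadic Q₀ Q j) (hj' : IsDyadic Q₀ Q j') : j = j' := by
  have h := hj.1.symm.trans hj'.1
  rw [div_eq_div_iff (by positivity) (by positivity), mul_right_inj' Q₀.l_pos.ne'] at h
  exact Nat.pow_right_injective le_rfl (by exact_mod_cast h.symm)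

theorem IsDyadic.carrier_subset (hQ : IsDyadic Q₀ Q j) : Q.carrier ⊆ Q₀.carrier := by
  obtain ⟨k, hk, rfl⟩ := isDyadic_iff.1 hQ
  intro x hx
  rw [mem_dyadicCube_iff] at hx
  rw [← dyadicCube_zero Q₀, mem_dyadicCube_iff]
  intro i
  rw [← dyadicIndex_add_ediv Q₀ 0 j, zero_add, hx i, Pi.zero_apply, Nat.cast_zero]
  exact Int.ediv_eq_zero_of_lt (by positivity) (by exact_mod_cast hk i)

theorem exists_isDyadic_mem (hx : x ∈ Q₀.carrier) (j : ℕ) :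
    ∃ Q, IsDyadic Q₀ Q j ∧ x ∈ Q.carrier := by
  have h := dyadicIndex_mem_Ico hx j
  refine ⟨dyadicCube Q₀ j fun i => (dyadicIndex Q₀ j x i).toNat,
    isDyadic_iff.2 ⟨_, fun i => ?_, rfl⟩, mem_dyadicCube_iff.2 fun i => ?_⟩
  · exact (Int.toNat_lt (h i).1).2 (by exact_mod_cast (h i).2)
  · exact (Int.toNat_of_nonneg (h i).1).symm

theorem exists_isParent (hQ : IsDyadic Q₀ Q (j + 1)) : ∃ P, IsParent Q₀ P Q := by
  obtain ⟨P, hP, haP⟩ := exists_isDyadic_mem (hQ.carrier_subset Q.a_mem_carrier) j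
  exact ⟨P, j, hQ, hP, hP.subset_of_le hQ j.le_succ haP Q.a_mem_carrier⟩

end Dyadic

section StoppingCubes

variable {n : ℕ} {E : Set (Fin n → ℝ)} {Q₀ Q Q' : Cube n} {x : Fin n → ℝ}

theorem carrier_subset_of_mem_DE (hQ : Q ∈ DE E Q₀) : Q.carrier ⊆ Q₀.carrier :=
  hQ.1.choose_spec.carrier_subset

theorem DE_eq_of_le {j j' : ℕ} (hQ : Q ∈ DE E Q₀) (hQ' : Q' ∈ DE E Q₀)
    (hj : IsDyadic Q₀ Q j) (hj' : IsDyadic Q₀ Q' j') (hle : j ≤ j')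
    (hx : x ∈ Q.carrier) (hx' : x ∈ Q'.carrier) : Q = Q' := by
  rcases hle.eq_or_lt with rfl | hlt
  · exact hj.eq_of_mem hj' hx hx'
  obtain ⟨m, rfl⟩ := Nat.exists_eq_add_of_lt hlt
  obtain ⟨P, hP⟩ := exists_isParent hj'
  have ⟨m', hm', hPm', hQ'P⟩ := hP
  obtain rfl : m' = j + m := by simpa using hm'.generation_eq hj'
  -- The parent of `Q'` lies inside `Q`, yet it meets `E`, which `Q` avoids.
  have hPQ : P.carrier ⊆ Q.carrier :=
    hj.subset_of_le hPm' (Nat.le_add_right j m) hx (hQ'P hx')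
  obtain ⟨y, hyP, hyE⟩ := hQ'.2.2 P hP
  exact (eq_empty_iff_forall_notMem.1 hQ.2.1 y ⟨hPQ hyP, hyE⟩).elim

theorem DE_pairwiseDisjoint : (DE E Q₀).PairwiseDisjoint Cube.carrier := by
  intro Q hQ Q' hQ' hne
  refine disjoint_left.2 fun x hx hx' => ?_
  obtain ⟨j, hj⟩ := hQ.1
  obtain ⟨j', hj'⟩ := hQ'.1
  rcases le_total j j' with hle | hle
  · exact hne (DE_eq_of_le hQ hQ' hj hj' hle hx hx')
  · exact hne (DE_eq_of_le hQ' hQ hj' hj hle hx' hx).symm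

theorem DE_countable : (DE E Q₀).Countable := by
  refine (countable_range fun p : ℕ × (Fin n → ℕ) => dyadicCube Q₀ p.1 p.2).mono ?_
  rintro Q ⟨⟨j, hj⟩, -⟩
  obtain ⟨k, -, rfl⟩ := isDyadic_iff.1 hj
  exact ⟨(j, k), rfl⟩

theorem exists_isDyadic_mem_disjoint (hE : IsClosed E) (hx : x ∈ Q₀.carrier) (hxE : x ∉ E) :
    ∃ j Q, IsDyadic Q₀ Q j ∧ x ∈ Q.carrier ∧ Q.carrier ∩ E = ∅ := by
  obtain ⟨δ, hδ, hball⟩ := Metric.isOpen_iff.1 hE.isOpen_compl x hxE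
  obtain ⟨j, hj⟩ := exists_div_two_pow_lt Q₀.l hδ
  obtain ⟨Q, hQ, hxQ⟩ := exists_isDyadic_mem hx j
  refine ⟨j, Q, hQ, hxQ, eq_empty_iff_forall_notMem.2 fun y ⟨hyQ, hyE⟩ => hball ?_ hyE⟩
  exact (Cube.dist_le_of_mem hyQ hxQ).trans_lt (hQ.1 ▸ hj)

theorem exists_mem_DE_of_mem_diff (hE : IsClosed E) (hx : x ∈ Q₀.carrier)
    (hxE : x ∉ E) : ∃ Q ∈ DE E Q₀, x ∈ Q.carrier := by
  have hS := exists_isDyadic_mem_disjoint hE hx hxE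
  -- The stopping cube of `x` is the coarsest dyadic cube containing `x` that avoids `E`.
  obtain ⟨Q, hQ, hxQ, hQE⟩ := Nat.find_spec hS
  refine ⟨Q, ⟨⟨_, hQ⟩, hQE, ?_⟩, hxQ⟩
  rintro P ⟨j, hQj, hPj, hQP⟩
  have hj : j < Nat.find hS := by rw [← hQj.generation_eq hQ]; exact j.lt_succ_self
  by_contra hPE
  exact Nat.find_min hS hj ⟨P, hPj, hQP hxQ, not_nonempty_iff_eq_empty.1 hPE⟩

theorem biUnion_DE (hE : IsClosed E) :
    ⋃ Q ∈ DE E Q₀, Q.carrier = Q₀.carrier \ E := by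
  refine Subset.antisymm (iUnion₂_subset fun Q hQ x hx => ⟨carrier_subset_of_mem_DE hQ hx, ?_⟩) ?_
  · exact fun hxE => eq_empty_iff_forall_notMem.1 hQ.2.1 x ⟨hx, hxE⟩
  · rintro x ⟨hx, hxE⟩
    obtain ⟨Q, hQ, hxQ⟩ := exists_mem_DE_of_mem_diff hE hx hxE
    exact mem_biUnion hQ hxQ

theorem tsum_vol_eq_measureReal_biUnion {S : Set (Cube n)} (hc : S.Countable)
    (hd : S.PairwiseDisjoint Cube.carrier) :
    ∑' Q : S, (Q : Cube n).vol = volume.real (⋃ Q ∈ S, Q.carrier) := by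
  rw [measureReal_def, measure_biUnion hc hd fun Q _ => Q.measurableSet_carrier,
    ENNReal.tsum_toReal_eq fun Q : S => (Q : Cube n).volume_carrier_ne_top]
  exact tsum_congr fun Q => (Q : Cube n).measureReal_carrier.symm

theorem tsum_vol_DE (p : Cube n → Prop) :
    ∑' Q : {Q : Cube n // Q ∈ DE E Q₀ ∧ p Q}, (Q : Cube n).vol =
      volume.real (⋃ Q ∈ {Q | Q ∈ DE E Q₀ ∧ p Q}, Q.carrier) :=
  tsum_vol_eq_measureReal_biUnion (DE_countable.mono fun _ h => h.1)
    (DE_pairwiseDisjoint.subset fun _ h => h.1)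

theorem biUnion_DE_subset (p : Cube n → Prop) :
    ⋃ Q ∈ {Q | Q ∈ DE E Q₀ ∧ p Q}, Q.carrier ⊆ Q₀.carrier :=
  iUnion₂_subset fun _ hQ => carrier_subset_of_mem_DE hQ.1

theorem tsum_vol_DE_of_forall (hE : IsClosed E) (hE0 : volume E = 0) {p : Cube n → Prop}
    (hp : ∀ Q ∈ DE E Q₀, p Q) :
    ∑' Q : {Q : Cube n // Q ∈ DE E Q₀ ∧ p Q}, (Q : Cube n).vol = Q₀.vol := by
  have hS : {Q | Q ∈ DE E Q₀ ∧ p Q} = DE E Q₀ := sep_eq_self_iff_mem_true.2 hp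
  rw [tsum_vol_DE, hS, biUnion_DE hE, measureReal_def, measure_sdiff_null hE0,
    ← measureReal_def, Q₀.measureReal_carrier]

theorem vol_le_tsum_vol_DE {p : Cube n → Prop} (hQ : Q ∈ DE E Q₀) (hp : p Q) :
    Q.vol ≤ ∑' Q : {Q : Cube n // Q ∈ DE E Q₀ ∧ p Q}, (Q : Cube n).vol := by
  rw [tsum_vol_DE, ← Q.measureReal_carrier]
  exact measureReal_mono (subset_biUnion_of_mem (u := Cube.carrier) ⟨hQ, hp⟩)
    (measure_ne_top_of_subset (biUnion_DE_subset p) Q₀.volume_carrier_ne_top)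

theorem tsum_vol_DE_add_vol_le {p : Cube n → Prop} (hQ : Q ∈ DE E Q₀) (hp : ¬ p Q) :
    ∑' Q : {Q : Cube n // Q ∈ DE E Q₀ ∧ p Q}, (Q : Cube n).vol + Q.vol ≤ Q₀.vol := by
  have hdisj : Disjoint (⋃ Q' ∈ {Q | Q ∈ DE E Q₀ ∧ p Q}, Q'.carrier) Q.carrier := by
    refine disjoint_iUnion₂_left.2 fun Q' hQ' => DE_pairwiseDisjoint hQ'.1 hQ ?_
    rintro rfl
    exact hp hQ'.2
  rw [tsum_vol_DE, ← Q.measureReal_carrier, ← measureReal_union hdisj Q.measurableSet_carrier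
    (measure_ne_top_of_subset (biUnion_DE_subset p) Q₀.volume_carrier_ne_top)
    Q.volume_carrier_ne_top, ← Q₀.measureReal_carrier]
  exact measureReal_mono (union_subset (biUnion_DE_subset p) (carrier_subset_of_mem_DE hQ))
    Q₀.volume_carrier_ne_top

theorem exists_mem_DE_l_lt (hE : IsClosed E) (hQ₀ : (Q₀.carrier ∩ E).Nonempty)
    (hE0 : volume E = 0) {ε : ℝ} (hε : 0 < ε) : ∃ Q ∈ DE E Q₀, Q.l < ε := by
  obtain ⟨e, he, heE⟩ := hQ₀
  obtain ⟨j, hj⟩ := exists_div_two_pow_lt Q₀.l hε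
  obtain ⟨R, hR, heR⟩ := exists_isDyadic_mem he j
  obtain ⟨x, hxR, hxE⟩ : (R.carrier \ E).Nonempty := by
    refine nonempty_of_measure_ne_zero (μ := volume) ?_
    rw [measure_sdiff_null hE0, R.volume_carrier, ENNReal.ofReal_ne_zero_iff]
    exact R.vol_pos
  obtain ⟨Q, hQ, hxQ⟩ := exists_mem_DE_of_mem_diff hE (hR.carrier_subset hxR) hxE
  obtain ⟨g, hg⟩ := hQ.1
  have hjg : j < g := by
    by_contra! hgj
    exact eq_empty_iff_forall_notMem.1 hQ.2.1 e ⟨hg.subset_of_le hR hgj hxQ hxR heR, heE⟩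
  refine ⟨Q, hQ, lt_of_le_of_lt ?_ hj⟩
  rw [hg.1]
  exact div_le_div_of_nonneg_left Q₀.l_pos.le (by positivity) (pow_le_pow_right₀ one_le_two hjg.le)

end StoppingCubes

section Distribution

variable {n : ℕ} {E : Set (Fin n → ℝ)} {Q₀ Q M : Cube n} {t L : ℝ}

theorem vol_le_sumGE (hQ : Q ∈ DE E Q₀) (hL : L ≤ Q.l) : Q.vol ≤ sumGE E Q₀ L :=
  vol_le_tsum_vol_DE hQ hL

theorem vol_le_sumLE (hQ : Q ∈ DE E Q₀) (hL : Q.l ≤ L) : Q.vol ≤ sumLE E Q₀ L :=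
  vol_le_tsum_vol_DE hQ hL

theorem sumGE_add_vol_le (hQ : Q ∈ DE E Q₀) (hL : Q.l < L) : sumGE E Q₀ L + Q.vol ≤ Q₀.vol :=
  tsum_vol_DE_add_vol_le hQ hL.not_ge

theorem sumLE_add_vol_le (hQ : Q ∈ DE E Q₀) (hL : L < Q.l) : sumLE E Q₀ L + Q.vol ≤ Q₀.vol :=
  tsum_vol_DE_add_vol_le hQ hL.not_ge

theorem sumLE_eq (hE : IsClosed E) (hE0 : volume E = 0) (hL : ∀ Q ∈ DE E Q₀, Q.l ≤ L) :
    sumLE E Q₀ L = Q₀.vol :=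
  tsum_vol_DE_of_forall hE hE0 hL

theorem sumGE_eq_zero (hL : ∀ Q ∈ DE E Q₀, Q.l < L) : sumGE E Q₀ L = 0 :=
  have : IsEmpty {Q : Cube n // Q ∈ DE E Q₀ ∧ L ≤ Q.l} :=
    ⟨fun Q => (hL Q Q.2.1).not_ge Q.2.2⟩
  tsum_empty

theorem Lfun_nonneg (E : Set (Fin n → ℝ)) (Q₀ : Cube n) (t : ℝ) : 0 ≤ Lfun E Q₀ t :=
  Real.sSup_nonneg fun _ hL => hL.1

theorem Sfun_nonneg (E : Set (Fin n → ℝ)) (Q₀ : Cube n) (t : ℝ) : 0 ≤ Sfun E Q₀ t :=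
  Real.sInf_nonneg fun _ hL => hL.1

theorem Lfun_le (hQ : Q ∈ DE E Q₀) (ht : Q₀.vol < t * Q₀.vol + Q.vol) : Lfun E Q₀ t ≤ Q.l :=
  Real.sSup_le (fun _ hL => not_lt.1 fun hlt => by linarith [sumGE_add_vol_le hQ hlt, hL.2])
    Q.l_pos.le

theorem Sfun_le (hQ : Q ∈ DE E Q₀) (ht : t * Q₀.vol ≤ Q.vol) : Sfun E Q₀ t ≤ Q.l :=
  csInf_le ⟨0, fun _ hL => hL.1⟩ ⟨Q.l_pos.le, ht.trans (vol_le_sumLE hQ le_rfl)⟩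

theorem Lfun_eq (hM : M ∈ DE E Q₀) (hMmax : ∀ Q ∈ DE E Q₀, Q.l ≤ M.l) (ht₀ : 0 < t)
    (ht : t * Q₀.vol ≤ M.vol) : Lfun E Q₀ t = M.l := by
  have hbound : ∀ L ∈ Lset t Q₀ E, L ≤ M.l := fun L hL => not_lt.1 fun hlt => by
    have h := hL.2
    rw [sumGE_eq_zero fun Q hQ => (hMmax Q hQ).trans_lt hlt] at h
    nlinarith [Q₀.vol_pos]
  exact le_antisymm (Real.sSup_le hbound M.l_pos.le)
    (le_csSup ⟨M.l, hbound⟩ ⟨M.l_pos.le, ht.trans (vol_le_sumGE hM le_rfl)⟩)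

theorem Sfun_eq (hE : IsClosed E) (hE0 : volume E = 0) (hM : M ∈ DE E Q₀)
    (hMmax : ∀ Q ∈ DE E Q₀, Q.l ≤ M.l) (ht₁ : t ≤ 1) (ht : Q₀.vol < t * Q₀.vol + M.vol) :
    Sfun E Q₀ t = M.l := by
  have hmem : M.l ∈ Sset t Q₀ E := by
    refine ⟨M.l_pos.le, ?_⟩
    rw [sumLE_eq hE hE0 hMmax]
    nlinarith [Q₀.vol_pos]
  refine le_antisymm (csInf_le ⟨0, fun _ hL => hL.1⟩ hmem) (le_csInf ⟨_, hmem⟩ fun L hL => ?_)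
  exact not_lt.1 fun hlt => by linarith [sumLE_add_vol_le hM hlt, hL.2]

end Distribution

section Limits

open Filter Topology

theorem eventually_lt_mul_add_nhdsLT_one {V v : ℝ} (hv : 0 < v) :
    ∀ᶠ t in 𝓝[<] (1 : ℝ), V < t * V + v := by
  have h : Tendsto (fun t : ℝ => t * V + v) (𝓝[<] 1) (𝓝 (1 * V + v)) :=
    ((continuous_id.mul continuous_const).add continuous_const).continuousAt.mono_left
      nhdsWithin_le_nhds
  exact h.eventually_const_lt (by linarith)

theorem eventually_mul_lt_nhdsGT_zero {V v : ℝ} (hv : 0 < v) :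
    ∀ᶠ t in 𝓝[>] (0 : ℝ), t * V < v := by
  have h : Tendsto (fun t : ℝ => t * V) (𝓝[>] 0) (𝓝 (0 * V)) :=
    (continuous_id.mul continuous_const).continuousAt.mono_left nhdsWithin_le_nhds
  exact h.eventually_lt_const (by linarith)

theorem tendsto_nhds_zero_of_nonneg {α : Type*} {l : Filter α} {f : α → ℝ} (h₀ : ∀ t, 0 ≤ f t)
    (h : ∀ ε > 0, ∀ᶠ t in l, f t < ε) : Tendsto f l (𝓝 0) :=
  tendsto_order.2 ⟨fun _ ha => .of_forall fun t => ha.trans_le (h₀ t), h⟩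

end Limits

theorem stmt10_general {n : ℕ} (E : Set (Fin n → ℝ)) (hE : IsClosed E)
    (hE0 : volume E = 0) (Q₀ : Cube n) (hQ₀ : (Q₀.carrier ∩ E).Nonempty)
    (M : Cube n) (hM : M ∈ DE E Q₀) (hMmax : ∀ Q ∈ DE E Q₀, Q.l ≤ M.l) :
    Filter.Tendsto (Lfun E Q₀) (nhdsWithin 1 (Set.Iio 1)) (nhds 0) ∧
    Filter.Tendsto (Sfun E Q₀) (nhdsWithin 0 (Set.Ioi 0)) (nhds 0) ∧
    Filter.Tendsto (Lfun E Q₀) (nhdsWithin 0 (Set.Ioi 0)) (nhds M.l) ∧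
    Filter.Tendsto (Sfun E Q₀) (nhdsWithin 1 (Set.Iio 1)) (nhds M.l) := by
  refine ⟨?_, ?_, ?_, ?_⟩
  · refine tendsto_nhds_zero_of_nonneg (Lfun_nonneg E Q₀) fun ε hε => ?_
    obtain ⟨Q, hQ, hQε⟩ := exists_mem_DE_l_lt hE hQ₀ hE0 hε
    filter_upwards [eventually_lt_mul_add_nhdsLT_one Q.vol_pos] with t ht
    exact (Lfun_le hQ ht).trans_lt hQε
  · refine tendsto_nhds_zero_of_nonneg (Sfun_nonneg E Q₀) fun ε hε => ?_
    obtain ⟨Q, hQ, hQε⟩ := exists_mem_DE_l_lt hE hQ₀ hE0 hε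
    filter_upwards [eventually_mul_lt_nhdsGT_zero Q.vol_pos] with t ht
    exact (Sfun_le hQ ht.le).trans_lt hQε
  · refine tendsto_const_nhds.congr' ?_
    filter_upwards [self_mem_nhdsWithin, eventually_mul_lt_nhdsGT_zero M.vol_pos] with t ht₀ ht
    exact (Lfun_eq hM hMmax ht₀ ht.le).symm
  · refine tendsto_const_nhds.congr' ?_
    filter_upwards [self_mem_nhdsWithin, eventually_lt_mul_add_nhdsLT_one M.vol_pos] with t ht₁ ht
    exact (Sfun_eq hE hE0 hM hMmax (le_of_lt ht₁) ht).symm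

/-- Limit behavior of `𝓛_{Q₀}` and `𝓢_{Q₀}` at the endpoints of `(0,1)`. -/
theorem stmt10 {n : ℕ} (E : Set (Fin n → ℝ)) (hE : IsClosed E) (hne : E.Nonempty)
    (hE0 : volume E = 0) (Q₀ : Cube n) (hQ₀ : (Q₀.carrier ∩ E).Nonempty)
    (M : Cube n) (hM : M ∈ DE E Q₀) (hMmax : ∀ Q ∈ DE E Q₀, Q.l ≤ M.l) :
    Filter.Tendsto (Lfun E Q₀) (nhdsWithin 1 (Set.Iio 1)) (nhds 0) ∧
    Filter.Tendsto (Sfun E Q₀) (nhdsWithin 0 (Set.Ioi 0)) (nhds 0) ∧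
    Filter.Tendsto (Lfun E Q₀) (nhdsWithin 0 (Set.Ioi 0)) (nhds M.l) ∧
    Filter.Tendsto (Sfun E Q₀) (nhdsWithin 1 (Set.Iio 1)) (nhds M.l) :=
  stmt10_general E hE hE0 Q₀ hQ₀ M hM hMmax
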